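/- arXiv:1803.03952 — 5 statements merged into one kernel-verified Lean document; each statement's English description precedes it below -/
import Mathlib

section
/- For $0 < \gamma < 1$ and $n \in \mathbb{N}$, the natural number $n$ belongs to the set $\mathcal{N}_\gamma = \{ n : n = \lfloor m^{1/\gamma} \rfloor \text{ for some } m \in \mathbb{N}\}$ if and only if $\lfloor -n^\gamma \rfloor - \lfloor -(n+1)^\gamma \rfloor = 1$. -/
/-!
The map `x ↦ x ^ (1 / γ)` is an increasing bijection of `[0, ∞)` with inverse `y ↦ y ^ γ`, so
`n = ⌊m ^ (1 / γ)⌋` exactly when `m` lies in `[n ^ γ, (n + 1) ^ γ)`. Since `γ < 1`,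
subadditivity of `y ↦ y ^ γ` gives `(n + 1) ^ γ ≤ n ^ γ + 1`, so this interval contains an integer
iff `⌈(n + 1) ^ γ⌉ - ⌈n ^ γ⌉ = 1`, which is the stated condition because `⌊-y⌋ = -⌈y⌉`.
-/

/-- The set of Piatetski-Shapiro numbers of index `γ`. -/
def PS (γ : ℝ) : Set ℕ := {n | ∃ m : ℕ, n = ⌊(m : ℝ) ^ ((1 : ℝ) / γ)⌋₊}

lemma Nat.floor_rpow_one_div_eq_iff {γ x : ℝ} (hγ : 0 < γ) (hx : 0 ≤ x) (n : ℕ) :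
    ⌊x ^ (1 / γ)⌋₊ = n ↔ (n : ℝ) ^ γ ≤ x ∧ x < ((n : ℝ) + 1) ^ γ := by
  rw [Nat.floor_eq_iff (by positivity), one_div,
    Real.le_rpow_inv_iff_of_pos n.cast_nonneg hx hγ,
    Real.rpow_inv_lt_iff_of_pos hx (by positivity) hγ]

lemma exists_nat_mem_Ico_iff {α : Type*} [Semiring α] [LinearOrder α] [IsOrderedRing α]
    [FloorSemiring α] {a b : α} :
    (∃ m : ℕ, (m : α) ∈ Set.Ico a b) ↔ (⌈a⌉₊ : α) < b :=
  ⟨fun ⟨_, ham, hmb⟩ => (Nat.cast_le.2 (Nat.ceil_le.2 ham)).trans_lt hmb,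
    fun h => ⟨⌈a⌉₊, Nat.le_ceil a, h⟩⟩

lemma Int.floor_neg_sub_floor_neg_eq_one_iff {α : Type*} [Ring α] [LinearOrder α]
    [IsStrictOrderedRing α] [FloorRing α] {a b : α} (hba : b ≤ a + 1) :
    ⌊-a⌋ - ⌊-b⌋ = 1 ↔ (⌈a⌉ : α) < b := by
  have : ⌈b⌉ ≤ ⌈a⌉ + 1 := by simpa using Int.ceil_le_ceil hba
  rw [Int.floor_neg, Int.floor_neg, ← Int.lt_ceil]
  omega

theorem stmt_0 (γ : ℝ) (hγ0 : 0 < γ) (hγ1 : γ < 1) (n : ℕ) :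
    n ∈ PS γ ↔ ⌊-((n : ℝ) ^ γ)⌋ - ⌊-(((n : ℝ) + 1) ^ γ)⌋ = 1 := by
  have hsub : ((n : ℝ) + 1) ^ γ ≤ (n : ℝ) ^ γ + 1 := by
    simpa using Real.rpow_add_le_add_rpow n.cast_nonneg zero_le_one hγ0.le hγ1.le
  rw [Int.floor_neg_sub_floor_neg_eq_one_iff hsub,
    ← natCast_ceil_eq_intCast_ceil (by positivity), ← exists_nat_mem_Ico_iff]
  exact exists_congr fun m => by
    rw [eq_comm, Nat.floor_rpow_one_div_eq_iff hγ0 m.cast_nonneg, Set.mem_Ico]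
end

section
/- Let $0 < \gamma < 1 < c$, let $I \subseteq \mathbb{R}$ be an interval of length $|I|$, and let $X \geq 3$, $L = \log X$. Then $\int_I \big| \sum_{n \in \mathcal{N}_\gamma \cap (X/2,X]} e(\theta n^c) \big|^2 \, d\theta \ll |I| X^\gamma + X^{2\gamma - c} L$, where $e(x) = e^{2\pi i x}$ and the implied constant depends only on $\gamma$ and $c$. -/
open MeasureTheory

/-- `e(x) = e^{2πix}`. -/
noncomputable def e (x : ℝ) : ℂ := Complex.exp (2 * Real.pi * Complex.I * x)

open Finset

/-!
Expanding the square, `∫_a^b |∑_m e(θ λ_m)|² = ∑_{m, m'} ∫_a^b cos (2π (λ_m - λ_{m'}) θ)`: the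
diagonal gives `b - a` per term and an off-diagonal term is at most `1 / (π |λ_m - λ_{m'}|)`.
Since `m ↦ ⌊m ^ (1/γ)⌋` is strictly increasing, `T` is a sum over `m ≤ 2 X ^ γ` with frequencies
`λ_m = ⌊m ^ (1/γ)⌋ ^ c`, and two mean value estimates show `|λ_m - λ_{m'}| ≫ X ^ (c - γ) |m - m'|`.
The harmonic bound `∑_{m ≠ m' ≤ M} 1 / |m - m'| ≤ 2 M (1 + log M)` then gives `X ^ (2γ - c) log X`.
-/

lemma rpow_sub_one_mul_sub_le_rpow_sub_rpow {x y β : ℝ} (hy : 0 ≤ y) (hyx : y ≤ x) (hβ : 1 < β) :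
    y ^ (β - 1) * (x - y) ≤ x ^ β - y ^ β := by
  rcases hy.eq_or_lt with rfl | hy
  · simpa [Real.zero_rpow (by linarith : β - 1 ≠ 0), Real.zero_rpow (by linarith : β ≠ 0)]
      using Real.rpow_nonneg hyx β
  have hpow : ∀ z : ℝ, 0 < z → z ^ β = z ^ (β - 1) * z := fun z hz => by
    rw [← Real.rpow_add_one hz.ne']; ring_nf
  have hmono : y ^ (β - 1) ≤ x ^ (β - 1) := Real.rpow_le_rpow hy.le hyx (by linarith)
  rw [hpow x (hy.trans_le hyx), hpow y hy]
  nlinarith [Real.rpow_nonneg hy.le (β - 1)]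

lemma floor_rpow_add_sub_le {β : ℝ} (hβ : 1 ≤ β) {m m' : ℕ} (h : m ≤ m') :
    ⌊(m : ℝ) ^ β⌋₊ + (m' - m) ≤ ⌊(m' : ℝ) ^ β⌋₊ := by
  have hd : ((m' - m : ℕ) : ℝ) ≤ ((m' - m : ℕ) : ℝ) ^ β := by
    rcases Nat.eq_zero_or_pos (m' - m) with h0 | h0
    · simp [h0, Real.zero_rpow (by linarith : β ≠ 0)]
    · exact Real.self_le_rpow_of_one_le (by exact_mod_cast h0) hβ
  have hsuper := Real.add_rpow_le_rpow_add (m.cast_nonneg : (0 : ℝ) ≤ m)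
    ((m' - m).cast_nonneg : (0 : ℝ) ≤ (m' - m : ℕ)) hβ
  rw [← Nat.cast_add, Nat.add_sub_cancel' h] at hsuper
  apply Nat.le_floor
  push_cast
  linarith [Nat.floor_le (Real.rpow_nonneg m.cast_nonneg β)]

lemma strictMono_floor_rpow {β : ℝ} (hβ : 1 ≤ β) : StrictMono fun m : ℕ => ⌊(m : ℝ) ^ β⌋₊ :=
  strictMono_nat_of_lt_succ fun m => by
    have := floor_rpow_add_sub_le hβ (m.le_add_right 1)
    push_cast at this ⊢
    omega

lemma rpow_sub_one_mul_sub_le_two_mul_floor_sub {β : ℝ} (hβ : 1 < β) {m m' : ℕ} (h : m ≤ m') :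
    (m : ℝ) ^ (β - 1) * (m' - m) ≤ 2 * ((⌊(m' : ℝ) ^ β⌋₊ : ℝ) - ⌊(m : ℝ) ^ β⌋₊) := by
  rcases h.eq_or_lt with rfl | hlt
  · simp
  have hsteps : ((m' : ℝ) - m) ≤ (⌊(m' : ℝ) ^ β⌋₊ : ℝ) - ⌊(m : ℝ) ^ β⌋₊ := by
    have := floor_rpow_add_sub_le hβ.le h
    rw [← Nat.cast_sub h]
    linarith [(Nat.cast_le (α := ℝ)).mpr this, Nat.cast_add (R := ℝ) ⌊(m : ℝ) ^ β⌋₊ (m' - m)]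
  have hone : (1 : ℝ) ≤ m' - m := by
    have : (m : ℝ) + 1 ≤ m' := by exact_mod_cast hlt
    linarith
  have hmvt := rpow_sub_one_mul_sub_le_rpow_sub_rpow m.cast_nonneg (Nat.cast_le.mpr h) hβ
  -- the floors lose at most `1`, which is paid for by `hsteps` since `m' - m ≥ 1`
  linarith [Nat.floor_le (Real.rpow_nonneg m.cast_nonneg β),
    Nat.lt_floor_add_one ((m' : ℝ) ^ β)]

lemma sum_erase_inv_abs_sub_le {M : ℕ} {s : Finset ℕ} (hs : s ⊆ Icc 1 M) {m : ℕ} (hm : m ∈ s) :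
    ∑ x ∈ s.erase m, |(m : ℝ) - x|⁻¹ ≤ 2 * (1 + Real.log M) := by
  set d : ℕ → ℕ := fun x => ((m : ℤ) - x).natAbs
  have hd : ∀ x : ℕ, |(m : ℝ) - x| = d x := fun x => by simp [d, Nat.cast_natAbs]
  have hfiber : ∀ k, #{x ∈ s.erase m | d x = k} ≤ 2 := fun k =>
    (card_le_card fun x hx => by
      simp only [mem_filter, d] at hx
      simp only [mem_insert, mem_singleton]
      omega).trans (card_le_two (a := m - k) (b := m + k))
  have himage : (s.erase m).image d ⊆ Icc 1 M := fun k hk => by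
    obtain ⟨x, hx, rfl⟩ := mem_image.mp hk
    have := mem_Icc.mp (hs (mem_of_mem_erase hx))
    have := mem_Icc.mp (hs hm)
    have := ne_of_mem_erase hx
    simp only [mem_Icc, d]
    omega
  calc ∑ x ∈ s.erase m, |(m : ℝ) - x|⁻¹
      = ∑ k ∈ (s.erase m).image d, #{x ∈ s.erase m | d x = k} • (k : ℝ)⁻¹ := by
        simp_rw [hd]
        exact sum_comp (fun k : ℕ => (k : ℝ)⁻¹) d
    _ ≤ ∑ k ∈ Icc 1 M, 2 * (k : ℝ)⁻¹ := by
        refine sum_le_sum_of_subset_of_nonneg himage (fun k _ _ => by positivity) |>.trans' ?_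
        refine sum_le_sum fun k _ => ?_
        rw [nsmul_eq_mul]
        gcongr
        exact_mod_cast hfiber k
    _ ≤ 2 * (1 + Real.log M) := by
        rw [← mul_sum]
        gcongr
        simpa [harmonic_eq_sum_Icc] using harmonic_le_one_add_log M

lemma sum_sum_erase_inv_abs_sub_le {M : ℕ} {s : Finset ℕ} (hs : s ⊆ Icc 1 M) :
    ∑ m ∈ s, ∑ x ∈ s.erase m, |(m : ℝ) - x|⁻¹ ≤ M * (2 * (1 + Real.log M)) := by
  calc ∑ m ∈ s, ∑ x ∈ s.erase m, |(m : ℝ) - x|⁻¹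
      ≤ ∑ _m ∈ s, 2 * (1 + Real.log M) := sum_le_sum fun m hm => sum_erase_inv_abs_sub_le hs hm
    _ ≤ M * (2 * (1 + Real.log M)) := by
        rw [sum_const, nsmul_eq_mul]
        have hlog : 0 ≤ Real.log M := Real.log_natCast_nonneg M
        gcongr
        simpa using card_le_card hs

lemma e_mul_conj_e (x y : ℝ) :
    e x * starRingEnd ℂ (e y) = Complex.exp (↑(2 * Real.pi * (x - y)) * Complex.I) := by
  simp only [e, ← Complex.exp_conj, ← Complex.exp_add, map_mul, Complex.conj_I,
    Complex.conj_ofReal, map_ofNat]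
  push_cast
  ring_nf

lemma norm_sum_e_sq {ι : Type*} (s : Finset ι) (f : ι → ℝ) (θ : ℝ) :
    ‖∑ i ∈ s, e (θ * f i)‖ ^ 2 = ∑ i ∈ s, ∑ j ∈ s, Real.cos (2 * Real.pi * (f i - f j) * θ) := by
  rw [← Complex.normSq_eq_norm_sq, ← Complex.ofReal_re (Complex.normSq _), ← Complex.mul_conj,
    map_sum, sum_mul_sum, Complex.re_sum]
  refine sum_congr rfl fun i _ => ?_
  rw [Complex.re_sum]
  refine sum_congr rfl fun j _ => ?_
  rw [e_mul_conj_e, Complex.exp_ofReal_mul_I_re]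
  ring_nf

lemma abs_integral_cos_mul_le (k a b : ℝ) (hk : k ≠ 0) :
    |∫ θ in a..b, Real.cos (k * θ)| ≤ 2 / |k| := by
  rw [intervalIntegral.integral_comp_mul_left Real.cos hk, integral_cos, smul_eq_mul, abs_mul,
    abs_inv, inv_mul_eq_div]
  gcongr
  linarith [abs_sub (Real.sin (k * b)) (Real.sin (k * a)), Real.abs_sin_le_one (k * b),
    Real.abs_sin_le_one (k * a)]

lemma integral_cos_mul_le_of_ne {x y : ℝ} (h : x ≠ y) (a b : ℝ) :
    ∫ θ in a..b, Real.cos (2 * Real.pi * (x - y) * θ) ≤ (Real.pi * |x - y|)⁻¹ := by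
  have hk : 2 * Real.pi * (x - y) ≠ 0 := by simp [sub_ne_zero.mpr h, Real.pi_ne_zero]
  refine (le_abs_self _).trans ((abs_integral_cos_mul_le _ a b hk).trans_eq ?_)
  rw [abs_mul, abs_mul, abs_two, abs_of_pos Real.pi_pos]
  field_simp

lemma integral_norm_sum_e_sq_le {ι : Type*} [DecidableEq ι] (s : Finset ι) {f : ι → ℝ}
    (hf : Set.InjOn f s) (a b : ℝ) :
    ∫ θ in a..b, ‖∑ i ∈ s, e (θ * f i)‖ ^ 2
      ≤ (b - a) * s.card + ∑ i ∈ s, ∑ j ∈ s.erase i, (Real.pi * |f i - f j|)⁻¹ := by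
  have hcont : ∀ i j, Continuous fun θ => Real.cos (2 * Real.pi * (f i - f j) * θ) :=
    fun i j => by fun_prop
  simp_rw [norm_sum_e_sq]
  rw [intervalIntegral.integral_finsetSum fun i _ =>
    (continuous_finsetSum s fun j _ => hcont i j).intervalIntegrable a b]
  simp_rw [intervalIntegral.integral_finsetSum fun j _ => (hcont _ j).intervalIntegrable a b]
  rw [card_eq_sum_ones, Nat.cast_sum, mul_sum, ← sum_add_distrib]
  refine sum_le_sum fun i hi => ?_
  rw [← add_sum_erase _ _ hi]
  refine add_le_add (by simp) (sum_le_sum fun j hj => ?_)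
  obtain ⟨hji, hj⟩ := mem_erase.mp hj
  exact integral_cos_mul_le_of_ne (fun h => hji (hf hj hi h.symm)) a b

lemma integral_norm_sum_e_sq_le_of_separated {M : ℕ} {s : Finset ℕ} (hs : s ⊆ Icc 1 M)
    {f : ℕ → ℝ} {δ : ℝ} (hδ : 0 < δ) (hsep : ∀ m ∈ s, ∀ m' ∈ s, δ * |(m : ℝ) - m'| ≤ |f m - f m'|)
    {a b : ℝ} (hab : a ≤ b) :
    ∫ θ in a..b, ‖∑ m ∈ s, e (θ * f m)‖ ^ 2
      ≤ (b - a) * M + M * (2 * (1 + Real.log M)) / (Real.pi * δ) := by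
  have hinj : Set.InjOn f s := fun m hm m' hm' h => by
    by_contra hne
    have := hsep m hm m' hm'
    have : 0 < |(m : ℝ) - m'| := abs_pos.mpr (sub_ne_zero.mpr (by exact_mod_cast hne))
    rw [h, sub_self, abs_zero] at *
    nlinarith
  refine (integral_norm_sum_e_sq_le s hinj a b).trans (add_le_add ?_ ?_)
  · have : s.card ≤ M := by simpa using card_le_card hs
    gcongr
  calc ∑ m ∈ s, ∑ m' ∈ s.erase m, (Real.pi * |f m - f m'|)⁻¹
      ≤ ∑ m ∈ s, ∑ m' ∈ s.erase m, (Real.pi * δ)⁻¹ * |(m : ℝ) - m'|⁻¹ := by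
        refine sum_le_sum fun m hm => sum_le_sum fun m' hm' => ?_
        obtain ⟨hne, hm'⟩ := mem_erase.mp hm'
        have : 0 < |(m : ℝ) - m'| := abs_pos.mpr (sub_ne_zero.mpr (by exact_mod_cast hne.symm))
        rw [← mul_inv, mul_assoc]
        gcongr
        exact hsep m hm m' hm'
    _ = (Real.pi * δ)⁻¹ * ∑ m ∈ s, ∑ m' ∈ s.erase m, |(m : ℝ) - m'|⁻¹ := by simp_rw [mul_sum]
    _ ≤ M * (2 * (1 + Real.log M)) / (Real.pi * δ) := by
        rw [inv_mul_eq_div]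
        gcongr
        exact sum_sum_erase_inv_abs_sub_le hs

lemma PS_eq_range (γ : ℝ) : PS γ = Set.range fun m : ℕ => ⌊(m : ℝ) ^ ((1 : ℝ) / γ)⌋₊ := by
  ext n
  simp [PS, eq_comm]

lemma sum_indicator_PS_eq {M : Type*} [AddCommMonoid M] {γ : ℝ} (hγ0 : 0 < γ) (hγ1 : γ < 1)
    (s : Finset ℕ) (F : ℕ → M) :
    ∑ n ∈ s, (PS γ).indicator F n = ∑ m ∈ s.preimage (fun m : ℕ => ⌊(m : ℝ) ^ ((1 : ℝ) / γ)⌋₊)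
      (strictMono_floor_rpow (one_lt_one_div hγ0 hγ1).le).injective.injOn,
      F ⌊(m : ℝ) ^ ((1 : ℝ) / γ)⌋₊ := by
  rw [PS_eq_range, ← sum_preimage _ s
    (strictMono_floor_rpow (one_lt_one_div hγ0 hγ1).le).injective.injOn _
    fun n _ hn => Set.indicator_of_notMem hn F]
  exact sum_congr rfl fun m _ => Set.indicator_of_mem (Set.mem_range_self m) F

lemma rpow_mul_sub_le_floor_rpow_rpow_sub {γ c Y : ℝ} (hγ0 : 0 < γ) (hγ1 : γ < 1) (hc : 1 < c)
    (hY : 0 < Y) {m m' : ℕ} (h : m ≤ m') (hYm : Y ≤ ⌊(m : ℝ) ^ ((1 : ℝ) / γ)⌋₊) :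
    Y ^ (c - γ) / 2 * (m' - m)
      ≤ (⌊(m' : ℝ) ^ ((1 : ℝ) / γ)⌋₊ : ℝ) ^ c - (⌊(m : ℝ) ^ ((1 : ℝ) / γ)⌋₊ : ℝ) ^ c := by
  have hβ := one_lt_one_div hγ0 hγ1
  have hmono : (⌊(m : ℝ) ^ ((1 : ℝ) / γ)⌋₊ : ℝ) ≤ ⌊(m' : ℝ) ^ ((1 : ℝ) / γ)⌋₊ := by
    exact_mod_cast (strictMono_floor_rpow hβ.le).monotone h
  have hpow : Y ^ (1 - γ) ≤ (m : ℝ) ^ ((1 : ℝ) / γ - 1) := by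
    have hexp : (m : ℝ) ^ ((1 : ℝ) / γ - 1) = ((m : ℝ) ^ ((1 : ℝ) / γ)) ^ (1 - γ) := by
      rw [← Real.rpow_mul m.cast_nonneg]
      congr 1
      field_simp
    rw [hexp]
    exact Real.rpow_le_rpow hY.le (hYm.trans (Nat.floor_le (by positivity))) (by linarith)
  have hgap : Y ^ (1 - γ) * (m' - m) / 2
      ≤ (⌊(m' : ℝ) ^ ((1 : ℝ) / γ)⌋₊ : ℝ) - ⌊(m : ℝ) ^ ((1 : ℝ) / γ)⌋₊ := by
    have := mul_le_mul_of_nonneg_right hpow (sub_nonneg.mpr (Nat.cast_le.mpr h))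
    linarith [rpow_sub_one_mul_sub_le_two_mul_floor_sub hβ h]
  set n : ℝ := ((⌊(m : ℝ) ^ ((1 : ℝ) / γ)⌋₊ : ℕ) : ℝ)
  set n' : ℝ := ((⌊(m' : ℝ) ^ ((1 : ℝ) / γ)⌋₊ : ℕ) : ℝ)
  calc Y ^ (c - γ) / 2 * (m' - m)
      = Y ^ (c - 1) * (Y ^ (1 - γ) * (m' - m) / 2) := by
        rw [show c - γ = (c - 1) + (1 - γ) by ring, Real.rpow_add hY]; ring
    _ ≤ n ^ (c - 1) * (n' - n) :=
        mul_le_mul (Real.rpow_le_rpow hY.le hYm (by linarith)) hgap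
          (by have := sub_nonneg.mpr (Nat.cast_le (α := ℝ).mpr h); positivity) (by positivity)
    _ ≤ n' ^ c - n ^ c := rpow_sub_one_mul_sub_le_rpow_sub_rpow (by positivity) hmono hc

lemma rpow_mul_abs_sub_le_abs_floor_rpow_rpow_sub {γ c Y : ℝ} (hγ0 : 0 < γ) (hγ1 : γ < 1)
    (hc : 1 < c) (hY : 0 < Y) {m m' : ℕ} (hYm : Y ≤ ⌊(m : ℝ) ^ ((1 : ℝ) / γ)⌋₊)
    (hYm' : Y ≤ ⌊(m' : ℝ) ^ ((1 : ℝ) / γ)⌋₊) :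
    Y ^ (c - γ) / 2 * |(m : ℝ) - m'|
      ≤ |(⌊(m : ℝ) ^ ((1 : ℝ) / γ)⌋₊ : ℝ) ^ c - (⌊(m' : ℝ) ^ ((1 : ℝ) / γ)⌋₊ : ℝ) ^ c| := by
  rcases le_total m m' with h | h
  · have key := rpow_mul_sub_le_floor_rpow_rpow_sub hγ0 hγ1 hc hY h hYm
    have : (m : ℝ) ≤ m' := by exact_mod_cast h
    rw [abs_sub_comm, abs_of_nonneg (by linarith), abs_sub_comm]
    exact key.trans (le_abs_self _)
  · have key := rpow_mul_sub_le_floor_rpow_rpow_sub hγ0 hγ1 hc hY h hYm'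
    have : (m' : ℝ) ≤ m := by exact_mod_cast h
    rw [abs_of_nonneg (by linarith)]
    exact key.trans (le_abs_self _)

lemma floor_rpow_mem_Icc {γ X : ℝ} (hγ0 : 0 < γ) (hγ1 : γ < 1) (hX : 1 ≤ X) {m : ℕ}
    (hm : ⌊(m : ℝ) ^ ((1 : ℝ) / γ)⌋₊ ∈ Ioc ⌊X / 2⌋₊ ⌊X⌋₊) : m ∈ Icc 1 ⌊2 * X ^ γ⌋₊ := by
  obtain ⟨hlo, hhi⟩ := mem_Ioc.mp hm
  have hm0 : m ≠ 0 := by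
    rintro rfl
    simp [Real.zero_rpow (inv_pos.mpr hγ0).ne'] at hlo
  refine mem_Icc.mpr ⟨Nat.one_le_iff_ne_zero.mpr hm0, Nat.le_floor ?_⟩
  have hlt : (m : ℝ) ^ ((1 : ℝ) / γ) ≤ 2 * X := by
    have := Nat.lt_floor_add_one ((m : ℝ) ^ ((1 : ℝ) / γ))
    have : (⌊(m : ℝ) ^ ((1 : ℝ) / γ)⌋₊ : ℝ) ≤ X :=
      (Nat.cast_le.mpr hhi).trans (Nat.floor_le (by linarith))
    linarith
  calc (m : ℝ) = ((m : ℝ) ^ ((1 : ℝ) / γ)) ^ γ := by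
        rw [← Real.rpow_mul m.cast_nonneg, one_div_mul_cancel hγ0.ne', Real.rpow_one]
    _ ≤ (2 * X) ^ γ := Real.rpow_le_rpow (by positivity) hlt hγ0.le
    _ = 2 ^ γ * X ^ γ := Real.mul_rpow (by norm_num) (by linarith)
    _ ≤ 2 * X ^ γ := by
        gcongr
        exact Real.rpow_le_self_of_one_le (by norm_num) hγ1.le

lemma one_add_log_floor_le {γ X : ℝ} (hγ0 : 0 ≤ γ) (hγ1 : γ ≤ 1) (hX : 3 ≤ X) :
    1 + Real.log ⌊2 * X ^ γ⌋₊ ≤ 3 * Real.log X := by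
  have hX0 : 0 < X := by linarith
  have hlogX : 1 ≤ Real.log X := by
    rw [Real.le_log_iff_exp_le hX0]
    linarith [Real.exp_one_lt_d9]
  have hM : (1 : ℝ) ≤ ⌊2 * X ^ γ⌋₊ := by
    exact_mod_cast Nat.le_floor <| by
      push_cast
      nlinarith [Real.one_le_rpow (by linarith : 1 ≤ X) hγ0]
  have hlogM : Real.log ⌊2 * X ^ γ⌋₊ ≤ Real.log 2 + γ * Real.log X := by
    rw [← Real.log_rpow hX0, ← Real.log_mul two_ne_zero (by positivity)]
    exact Real.log_le_log (by linarith) (Nat.floor_le (by positivity))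
  nlinarith [Real.log_two_lt_d9]

lemma separated_bound_le {γ c X t : ℝ} (hγ0 : 0 < γ) (hγ1 : γ < 1) (hc : 1 < c) (hX : 3 ≤ X)
    (ht : 0 ≤ t) :
    t * ⌊2 * X ^ γ⌋₊
        + ⌊2 * X ^ γ⌋₊ * (2 * (1 + Real.log ⌊2 * X ^ γ⌋₊)) / (Real.pi * ((X / 2) ^ (c - γ) / 2))
      ≤ 8 * 2 ^ c * (t * X ^ γ + X ^ (2 * γ - c) * Real.log X) := by
  have hX0 : 0 < X := by linarith
  have hM : (⌊2 * X ^ γ⌋₊ : ℝ) ≤ 2 * X ^ γ := Nat.floor_le (by positivity)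
  have hlog := one_add_log_floor_le hγ0.le hγ1.le hX
  have hpow : X ^ γ / (X / 2) ^ (c - γ) ≤ 2 ^ c * X ^ (2 * γ - c) := by
    rw [Real.div_rpow hX0.le zero_le_two, div_div_eq_mul_div, div_le_iff₀ (by positivity),
      mul_assoc, ← Real.rpow_add hX0, show 2 * γ - c + (c - γ) = γ by ring]
    rw [mul_comm]
    gcongr
    · norm_num
    · linarith
  have hπ : 3 < Real.pi := Real.pi_gt_three
  have hlogX : 0 ≤ Real.log X := Real.log_nonneg (by linarith)
  have h2c : 1 ≤ (2 : ℝ) ^ c := Real.one_le_rpow one_le_two (by linarith)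
  have hterm1 : t * ⌊2 * X ^ γ⌋₊ ≤ 8 * 2 ^ c * (t * X ^ γ) := by
    nlinarith [mul_le_mul_of_nonneg_left hM ht, mul_nonneg ht (Real.rpow_nonneg hX0.le γ)]
  have hterm2 :
      ⌊2 * X ^ γ⌋₊ * (2 * (1 + Real.log ⌊2 * X ^ γ⌋₊)) / (Real.pi * ((X / 2) ^ (c - γ) / 2))
        ≤ 8 * 2 ^ c * (X ^ (2 * γ - c) * Real.log X) := by
    have hlogM := Real.log_natCast_nonneg ⌊2 * X ^ γ⌋₊
    calc _ = 4 / Real.pi * (⌊2 * X ^ γ⌋₊ * (1 + Real.log ⌊2 * X ^ γ⌋₊)) / (X / 2) ^ (c - γ) := by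
          field_simp; ring
      _ ≤ 4 / 3 * (2 * X ^ γ * (3 * Real.log X)) / (X / 2) ^ (c - γ) := by gcongr
      _ = 8 * Real.log X * (X ^ γ / (X / 2) ^ (c - γ)) := by ring
      _ ≤ 8 * Real.log X * (2 ^ c * X ^ (2 * γ - c)) := by gcongr
      _ = 8 * 2 ^ c * (X ^ (2 * γ - c) * Real.log X) := by ring
  linarith

theorem stmt_5 (γ c : ℝ) (hγ0 : 0 < γ) (hγ1 : γ < 1) (hc : 1 < c) :
    ∃ C > 0, ∀ a b : ℝ, a ≤ b → ∀ X : ℝ, 3 ≤ X →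
      (∫ θ in a..b,
        ‖∑ n ∈ Finset.Ioc ⌊X / 2⌋₊ ⌊X⌋₊,
          Set.indicator (PS γ) (fun n => e (θ * (n : ℝ) ^ c)) n‖ ^ 2)
        ≤ C * ((b - a) * X ^ γ + X ^ (2 * γ - c) * Real.log X) := by
  refine ⟨8 * 2 ^ c, by positivity, fun a b hab X hX => ?_⟩
  simp_rw [sum_indicator_PS_eq hγ0 hγ1]
  set T := (Ioc ⌊X / 2⌋₊ ⌊X⌋₊).preimage (fun m : ℕ => ⌊(m : ℝ) ^ ((1 : ℝ) / γ)⌋₊)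
    (strictMono_floor_rpow (one_lt_one_div hγ0 hγ1).le).injective.injOn
  have hT : ∀ m ∈ T, ⌊(m : ℝ) ^ ((1 : ℝ) / γ)⌋₊ ∈ Ioc ⌊X / 2⌋₊ ⌊X⌋₊ := fun m hm => by
    rwa [mem_preimage] at hm
  have hhalf : ∀ m ∈ T, X / 2 ≤ ⌊(m : ℝ) ^ ((1 : ℝ) / γ)⌋₊ := fun m hm =>
    ((Nat.floor_lt (by positivity)).mp (mem_Ioc.mp (hT m hm)).1).le
  refine (integral_norm_sum_e_sq_le_of_separated
    (fun m hm => floor_rpow_mem_Icc hγ0 hγ1 (by linarith) (hT m hm))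
    (by positivity : 0 < (X / 2) ^ (c - γ) / 2)
    (fun m hm m' hm' => rpow_mul_abs_sub_le_abs_floor_rpow_rpow_sub hγ0 hγ1 hc (by positivity)
      (hhalf m hm) (hhalf m' hm')) hab).trans ?_
  exact separated_bound_le hγ0 hγ1 hc hX (sub_nonneg.mpr hab)
end

section
/- Let $0 < \gamma < 1 < c$, let $I \subseteq \mathbb{R}$ be an interval, and let $X \geq 3$, $L = \log X$. Then $\int_I \big| \sum_{p \in \mathcal{N}_\gamma \cap (X/2,X], \, p \text{ prime}} (\log p) e(\theta p^c) \big|^2 \, d\theta \ll |I| X^\gamma L^2 + X^{2\gamma - c} L^3$, with implied constant depending only on $\gamma$ and $c$. -/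
open MeasureTheory

/-!
Expanding the square, the integral is `∑_{p,q} log p log q ∫_I e(θ (p^c - q^c)) dθ`. The
diagonal contributes `|I| ∑ log² p ≪ |I| X^γ L²`, as there are `≪ X^γ` Piatetski-Shapiro numbers
up to `X`. Off the diagonal, `|∫_I e(θ d) dθ| ≤ 1 / (π |d|)` and
`|p^c - q^c| ≥ (X/2)^(c-1) |p - q|`. Piatetski-Shapiro numbers in `[X/2, X]` are `≫ X^(1-γ)`
apart, so for fixed `p` the sum of `1 / |p - q|` is `≪ X^(γ-1) L`, like a harmonic sum;
summing over the `≪ X^γ` values of `p` gives `≪ X^(2γ-c) L³`.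
-/

open Real Finset ComplexConjugate

lemma mul_rpow_sub_one_mul_sub_le_rpow_sub {r s t : ℝ} (hr : 1 ≤ r) (ht : 0 < t) (hts : t ≤ s) :
    r * t ^ (r - 1) * (s - t) ≤ s ^ r - t ^ r := by
  have hbern := one_add_mul_self_le_rpow_one_add
    (by linarith [div_nonneg (sub_nonneg.mpr hts) ht.le] : -1 ≤ (s - t) / t) hr
  rw [show 1 + (s - t) / t = s / t by field_simp; ring, div_rpow (ht.le.trans hts) ht.le,
    le_div_iff₀ (rpow_pos_of_pos ht r)] at hbern
  have hpow : t ^ r = t ^ (r - 1) * t := by rw [← rpow_add_one ht.ne', sub_add_cancel]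
  calc r * t ^ (r - 1) * (s - t) = (1 + r * ((s - t) / t)) * t ^ r - t ^ r := by
        rw [hpow]; field_simp; ring
    _ ≤ s ^ r - t ^ r := by linarith

lemma rpow_sub_one_mul_abs_sub_le {c Y s t : ℝ} (hc : 1 ≤ c) (hY : 0 < Y) (hs : Y ≤ s)
    (ht : Y ≤ t) : Y ^ (c - 1) * |s - t| ≤ |s ^ c - t ^ c| := by
  wlog hts : t ≤ s generalizing s t
  · rw [abs_sub_comm, abs_sub_comm (s ^ c)]
    exact this ht hs (le_of_not_ge hts)
  have hst : 0 ≤ s - t := sub_nonneg.mpr hts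
  rw [abs_of_nonneg hst, abs_of_nonneg (sub_nonneg.mpr
    (rpow_le_rpow (hY.le.trans ht) hts (by linarith)))]
  calc Y ^ (c - 1) * (s - t) ≤ c * t ^ (c - 1) * (s - t) := by
        gcongr
        calc Y ^ (c - 1) ≤ t ^ (c - 1) := rpow_le_rpow hY.le ht (by linarith)
          _ ≤ c * t ^ (c - 1) := le_mul_of_one_le_left (rpow_nonneg (hY.le.trans ht) _) hc
    _ ≤ s ^ c - t ^ c := mul_rpow_sub_one_mul_sub_le_rpow_sub hc (hY.trans_le ht) hts

lemma sum_Icc_inv_le_one_add_log (n : ℕ) : ∑ k ∈ Icc 1 n, (k : ℝ)⁻¹ ≤ 1 + log n := by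
  simpa [harmonic_eq_sum_Icc] using harmonic_le_one_add_log n

lemma sum_one_div_le_of_separated {ι : Type*} {s : Finset ι} {v : ι → ℝ} {δ M : ℝ}
    (hδ : 0 < δ) (hM : 0 ≤ M) (hv : ∀ i ∈ s, δ ≤ v i ∧ v i ≤ M)
    (hsep : ∀ i ∈ s, ∀ j ∈ s, i ≠ j → δ ≤ |v i - v j|) :
    ∑ i ∈ s, 1 / v i ≤ (1 + log (1 + M / δ)) / δ := by
  -- `v i` lies in `[δ k i, δ (k i + 1))`, and separation makes `k` injective
  set k : ι → ℕ := fun i => ⌊v i / δ⌋₊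
  have hv0 : ∀ i ∈ s, 0 ≤ v i / δ := fun i hi => div_nonneg (hδ.le.trans (hv i hi).1) hδ.le
  have hk1 : ∀ i ∈ s, 1 ≤ k i := fun i hi =>
    Nat.le_floor <| by rw [Nat.cast_one, le_div_iff₀ hδ, one_mul]; exact (hv i hi).1
  have hkv : ∀ i ∈ s, δ * k i ≤ v i := fun i hi => by
    rw [mul_comm, ← le_div_iff₀ hδ]; exact Nat.floor_le (hv0 i hi)
  have hkM : ∀ i ∈ s, k i ≤ ⌊M / δ⌋₊ := fun i hi =>
    Nat.floor_le_floor (div_le_div_of_nonneg_right (hv i hi).2 hδ.le)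
  have hinj : Set.InjOn k s := by
    intro i hi j hj hij
    by_contra hne
    have hfl : ⌊v i / δ⌋ = ⌊v j / δ⌋ := by
      rw [← Int.natCast_floor_eq_floor (hv0 i hi), ← Int.natCast_floor_eq_floor (hv0 j hj)]
      exact congrArg _ hij
    have hlt := Int.abs_sub_lt_one_of_floor_eq_floor hfl
    rw [← sub_div, abs_div, abs_of_pos hδ, div_lt_one hδ] at hlt
    exact (hsep i hi j hj hne).not_gt hlt
  calc ∑ i ∈ s, 1 / v i ≤ ∑ i ∈ s, (k i : ℝ)⁻¹ / δ := sum_le_sum fun i hi => by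
        have hk0 : (0 : ℝ) < k i := by exact_mod_cast hk1 i hi
        rw [inv_div_left, ← one_div]
        exact one_div_le_one_div_of_le (by positivity) (hkv i hi)
    _ = ∑ n ∈ s.image k, (n : ℝ)⁻¹ / δ :=
        (sum_image (f := fun n : ℕ => (n : ℝ)⁻¹ / δ) hinj).symm
    _ ≤ ∑ n ∈ Icc 1 ⌊M / δ⌋₊, (n : ℝ)⁻¹ / δ := by
        refine sum_le_sum_of_subset_of_nonneg ?_ fun _ _ _ => by positivity
        simp only [subset_iff, mem_image, mem_Icc]
        rintro _ ⟨i, hi, rfl⟩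
        exact ⟨hk1 i hi, hkM i hi⟩
    _ ≤ (1 + log (1 + M / δ)) / δ := by
        rw [← sum_div]
        gcongr
        refine (sum_Icc_inv_le_one_add_log _).trans (add_le_add_right ?_ 1)
        rcases Nat.eq_zero_or_pos ⌊M / δ⌋₊ with h | h
        · rw [h, Nat.cast_zero, log_zero]
          exact log_nonneg (le_add_of_nonneg_right (by positivity))
        · exact log_le_log (by exact_mod_cast h)
            ((Nat.floor_le (by positivity)).trans (le_add_of_nonneg_left zero_le_one))

lemma sum_erase_one_div_abs_sub_le_of_separated {ι : Type*} [DecidableEq ι] {s : Finset ι}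
    {u : ι → ℝ} {δ M : ℝ} (hδ : 0 < δ) (hM : 0 ≤ M)
    (hsep : ∀ i ∈ s, ∀ j ∈ s, i ≠ j → δ ≤ |u i - u j|)
    (hdiam : ∀ i ∈ s, ∀ j ∈ s, |u i - u j| ≤ M) {i : ι} (hi : i ∈ s) :
    ∑ j ∈ s.erase i, 1 / |u j - u i| ≤ 2 * ((1 + log (1 + M / δ)) / δ) := by
  -- `σ = 1` and `σ = -1` select the points on either side of `u i`
  have side : ∀ σ : ℝ, |σ| = 1 →
      ∑ j ∈ (s.erase i).filter (fun j => 0 < σ * (u j - u i)), 1 / |u j - u i| ≤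
        (1 + log (1 + M / δ)) / δ := by
    intro σ hσ
    have habs : ∀ j ∈ (s.erase i).filter (fun j => 0 < σ * (u j - u i)),
        |u j - u i| = σ * (u j - u i) := fun j hj => by
      rw [← abs_of_pos (mem_filter.mp hj).2, abs_mul, hσ, one_mul]
    rw [sum_congr rfl fun j hj => by rw [habs j hj]]
    refine sum_one_div_le_of_separated hδ hM (fun j hj => ?_) fun j hj j' hj' hne => ?_
    · rw [← habs j hj]
      obtain ⟨hj, -⟩ := mem_filter.mp hj
      exact ⟨hsep j (mem_of_mem_erase hj) i hi (ne_of_mem_erase hj),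
        hdiam j (mem_of_mem_erase hj) i hi⟩
    · rw [← mul_sub, sub_sub_sub_cancel_right, abs_mul, hσ, one_mul]
      exact hsep j (mem_of_mem_erase (mem_filter.mp hj).1) j'
        (mem_of_mem_erase (mem_filter.mp hj').1) hne
  have hcompl : (s.erase i).filter (fun j => ¬ 0 < 1 * (u j - u i)) =
      (s.erase i).filter (fun j => 0 < -1 * (u j - u i)) := by
    refine filter_congr fun j hj => ?_
    have hne : u j - u i ≠ 0 := fun h => by
      have := hsep j (mem_of_mem_erase hj) i hi (ne_of_mem_erase hj)
      rw [h, abs_zero] at this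
      exact this.not_gt hδ
    constructor <;> intro h <;> cases hne.lt_or_gt <;> linarith
  rw [← sum_filter_add_sum_filter_not (s.erase i) (fun j => 0 < 1 * (u j - u i)), hcompl,
    two_mul]
  exact add_le_add (side 1 (by simp)) (side (-1) (by simp))

lemma e_add (s t : ℝ) : e (s + t) = e s * e t := by
  simp only [e, ← Complex.exp_add]
  push_cast
  ring_nf

lemma conj_e (t : ℝ) : conj (e t) = e (-t) := by
  simp only [e, ← Complex.exp_conj, map_mul, Complex.conj_I, Complex.conj_ofReal, map_ofNat]
  push_cast
  ring_nf

lemma continuous_e_mul (d : ℝ) : Continuous fun θ : ℝ => e (θ * d) := by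
  unfold e
  fun_prop

lemma norm_intervalIntegral_e_mul_le (a b : ℝ) {d : ℝ} (hd : d ≠ 0) :
    ‖∫ θ in a..b, e (θ * d)‖ ≤ 1 / (π * |d|) := by
  set z : ℂ := 2 * π * Complex.I * d
  have hz : z ≠ 0 := by simp [z, pi_ne_zero, hd]
  have hnorm : ∀ t : ℝ, ‖Complex.exp (z * t)‖ = 1 := fun t => by simp [z, Complex.norm_exp]
  have hint : ∫ θ in a..b, e (θ * d) = (Complex.exp (z * b) - Complex.exp (z * a)) / z := by
    rw [← integral_exp_mul_complex hz]
    congr 1 with θ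
    simp only [e, z]
    push_cast
    ring_nf
  have hz_norm : ‖z‖ = 2 * π * |d| := by simp [z, abs_of_pos pi_pos]
  calc ‖∫ θ in a..b, e (θ * d)‖
      ≤ (‖Complex.exp (z * b)‖ + ‖Complex.exp (z * a)‖) / ‖z‖ := by
        rw [hint, norm_div]; gcongr; exact norm_sub_le _ _
    _ = 1 / (π * |d|) := by
        rw [hnorm, hnorm, hz_norm]; field_simp; norm_num

lemma norm_sq_sum_e_eq {ι : Type*} (s : Finset ι) (w : ι → ℂ) (x : ι → ℝ) (θ : ℝ) :
    ‖∑ i ∈ s, w i * e (θ * x i)‖ ^ 2 =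
      (∑ i ∈ s, ∑ j ∈ s, w i * conj (w j) * e (θ * (x i - x j))).re := by
  rw [← Complex.ofReal_re (_ ^ 2), Complex.ofReal_pow, ← Complex.mul_conj', map_sum,
    sum_mul_sum]
  congr 1
  refine sum_congr rfl fun i _ => sum_congr rfl fun j _ => ?_
  rw [map_mul, conj_e, mul_sub, sub_eq_add_neg, e_add]
  ring

lemma intervalIntegral_norm_sq_sum_e_eq {ι : Type*} (s : Finset ι) (w : ι → ℂ) (x : ι → ℝ)
    (a b : ℝ) :
    ∫ θ in a..b, ‖∑ i ∈ s, w i * e (θ * x i)‖ ^ 2 =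
      ∑ i ∈ s, ∑ j ∈ s, (w i * conj (w j) * ∫ θ in a..b, e (θ * (x i - x j))).re := by
  have hterm : ∀ i j, Continuous fun θ => w i * conj (w j) * e (θ * (x i - x j)) :=
    fun i j => continuous_const.mul (continuous_e_mul _)
  have hrow : ∀ i, Continuous fun θ => ∑ j ∈ s, w i * conj (w j) * e (θ * (x i - x j)) :=
    fun i => continuous_finsetSum s fun j _ => hterm i j
  simp_rw [norm_sq_sum_e_eq, ← RCLike.re_to_complex]
  rw [intervalIntegral.intervalIntegral_re
      ((continuous_finsetSum s fun i _ => hrow i).intervalIntegrable a b),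
    intervalIntegral.integral_finsetSum fun i _ => (hrow i).intervalIntegrable a b, map_sum]
  refine sum_congr rfl fun i _ => ?_
  rw [intervalIntegral.integral_finsetSum fun j _ => (hterm i j).intervalIntegrable a b]
  simp only [map_sum, intervalIntegral.integral_const_mul]

theorem intervalIntegral_norm_sq_sum_e_le {ι : Type*} [DecidableEq ι] (s : Finset ι)
    (w : ι → ℂ) {x : ι → ℝ} (hx : Set.InjOn x s) (a b : ℝ) :
    ∫ θ in a..b, ‖∑ i ∈ s, w i * e (θ * x i)‖ ^ 2 ≤
      (b - a) * ∑ i ∈ s, ‖w i‖ ^ 2 +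
        ∑ i ∈ s, ∑ j ∈ s.erase i, ‖w i‖ * ‖w j‖ / (π * |x i - x j|) := by
  rw [intervalIntegral_norm_sq_sum_e_eq, mul_sum, ← sum_add_distrib]
  refine sum_le_sum fun i hi => ?_
  rw [← add_sum_erase s _ hi]
  gcongr ?_ + ?_
  · simp [e, Complex.mul_conj', ← Complex.ofReal_pow, mul_comm]
  · refine sum_le_sum fun j hj => ?_
    have hne : x i - x j ≠ 0 :=
      sub_ne_zero.mpr fun h => ne_of_mem_erase hj (hx hi (mem_of_mem_erase hj) h).symm
    calc _ ≤ ‖w i * conj (w j) * ∫ θ in a..b, e (θ * (x i - x j))‖ := Complex.re_le_norm _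
      _ ≤ ‖w i‖ * ‖w j‖ * (1 / (π * |x i - x j|)) := by
        rw [norm_mul, norm_mul, Complex.norm_conj]
        gcongr
        exact norm_intervalIntegral_e_mul_le a b hne
      _ = _ := by ring

lemma sum_sum_erase_div_abs_rpow_sub_le {ι : Type*} [DecidableEq ι] {s : Finset ι}
    {u : ι → ℝ} {w : ι → ℂ} {c Y δ M W : ℝ} (hc : 1 ≤ c) (hY : 0 < Y) (hδ : 0 < δ) (hM : 0 ≤ M)
    (hw : ∀ i ∈ s, ‖w i‖ ≤ W) (hYu : ∀ i ∈ s, Y ≤ u i)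
    (hsep : ∀ i ∈ s, ∀ j ∈ s, i ≠ j → δ ≤ |u i - u j|)
    (hdiam : ∀ i ∈ s, ∀ j ∈ s, |u i - u j| ≤ M) :
    ∑ i ∈ s, ∑ j ∈ s.erase i, ‖w i‖ * ‖w j‖ / (π * |u i ^ c - u j ^ c|) ≤
      #s * (W ^ 2 / (π * Y ^ (c - 1)) * (2 * ((1 + log (1 + M / δ)) / δ))) := by
  rw [← nsmul_eq_mul]
  refine sum_le_card_nsmul _ _ _ fun i hi => ?_
  have hterm : ∀ j ∈ s.erase i, ‖w i‖ * ‖w j‖ / (π * |u i ^ c - u j ^ c|) ≤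
      W ^ 2 / (π * Y ^ (c - 1)) * (1 / |u j - u i|) := fun j hj => by
    have hj' := mem_of_mem_erase hj
    have hpos : 0 < |u i - u j| := hδ.trans_le (hsep i hi j hj' (ne_of_mem_erase hj).symm)
    rw [div_mul_div_comm, mul_one, mul_assoc, abs_sub_comm (u j)]
    gcongr
    · rw [sq]
      exact mul_le_mul (hw i hi) (hw j hj') (norm_nonneg _) ((norm_nonneg _).trans (hw i hi))
    · exact rpow_sub_one_mul_abs_sub_le hc hY (hYu i hi) (hYu j hj')
  calc ∑ j ∈ s.erase i, ‖w i‖ * ‖w j‖ / (π * |u i ^ c - u j ^ c|)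
      ≤ ∑ j ∈ s.erase i, W ^ 2 / (π * Y ^ (c - 1)) * (1 / |u j - u i|) := sum_le_sum hterm
    _ ≤ _ := by
      rw [← mul_sum]
      have hW : 0 ≤ W := (norm_nonneg _).trans (hw i hi)
      gcongr
      exact sum_erase_one_div_abs_sub_le_of_separated hδ hM hsep hdiam hi

lemma rpow_one_sub_div_le_sub_of_mem_PS {γ Y : ℝ} (hγ0 : 0 < γ) (hγ1 : γ ≤ 1) (hY : 0 < Y)
    {p q : ℕ} (hp : p ∈ PS γ) (hq : q ∈ PS γ) (hYp : Y ≤ p) (hpq : p < q) :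
    Y ^ (1 - γ) / (2 * γ) ≤ q - p := by
  obtain ⟨m, rfl⟩ := hp
  obtain ⟨m', rfl⟩ := hq
  set r : ℝ := 1 / γ
  have hr : 1 ≤ r := by rw [le_div_iff₀ hγ0]; linarith
  have hmm' : m < m' := by
    by_contra! h
    exact hpq.not_ge (Nat.floor_le_floor (rpow_le_rpow (by positivity) (by exact_mod_cast h)
      (by linarith)))
  have hm : (1 : ℝ) ≤ m := by
    rcases Nat.eq_zero_or_pos m with hm0 | hm0
    · rw [hm0, Nat.cast_zero, zero_rpow (by linarith), Nat.floor_zero, Nat.cast_zero] at hYp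
      linarith
    · exact_mod_cast hm0
  have hp_le : (⌊(m : ℝ) ^ r⌋₊ : ℝ) ≤ (m : ℝ) ^ r := Nat.floor_le (by positivity)
  -- the gap between consecutive terms `m ^ r` and `(m + 1) ^ r` is at least `r m ^ (r - 1)`,
  -- and `m ^ (r - 1) = (m ^ r) ^ (1 - γ) ≥ p ^ (1 - γ)`
  have hslope : Y ^ (1 - γ) ≤ (m : ℝ) ^ (r - 1) := by
    have : (m : ℝ) ^ (r - 1) = ((m : ℝ) ^ r) ^ (1 - γ) := by
      rw [← rpow_mul (by positivity)]; congr 1; simp only [r]; field_simp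
    rw [this]
    exact rpow_le_rpow hY.le (hYp.trans hp_le) (by linarith)
  have hstep : r * (m : ℝ) ^ (r - 1) ≤ ((m : ℝ) + 1) ^ r - (m : ℝ) ^ r := by
    simpa using mul_rpow_sub_one_mul_sub_le_rpow_sub hr (by linarith) (le_add_of_nonneg_right
      zero_le_one : (m : ℝ) ≤ m + 1)
  have hq_gt : ((m : ℝ) + 1) ^ r - 1 < ⌊(m' : ℝ) ^ r⌋₊ := by
    have h1 : ((m : ℝ) + 1) ^ r ≤ (m' : ℝ) ^ r :=
      rpow_le_rpow (by positivity) (by exact_mod_cast hmm') (by linarith)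
    linarith [Nat.lt_floor_add_one ((m' : ℝ) ^ r)]
  have hq_ge : (⌊(m : ℝ) ^ r⌋₊ : ℝ) + 1 ≤ ⌊(m' : ℝ) ^ r⌋₊ := by exact_mod_cast hpq
  have hYr : Y ^ (1 - γ) / (2 * γ) = r * Y ^ (1 - γ) / 2 := by simp only [r]; field_simp
  rw [hYr]
  nlinarith [mul_le_mul_of_nonneg_left hslope (by positivity : (0 : ℝ) ≤ r)]

lemma rpow_one_sub_div_le_abs_sub_of_mem_PS {γ Y : ℝ} (hγ0 : 0 < γ) (hγ1 : γ ≤ 1) (hY : 0 < Y)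
    {p q : ℕ} (hp : p ∈ PS γ) (hq : q ∈ PS γ) (hYp : Y ≤ p) (hYq : Y ≤ q) (hpq : p ≠ q) :
    Y ^ (1 - γ) / (2 * γ) ≤ |(p : ℝ) - q| := by
  rcases hpq.lt_or_gt with h | h
  · rw [abs_sub_comm, abs_of_pos (by simpa using h)]
    exact rpow_one_sub_div_le_sub_of_mem_PS hγ0 hγ1 hY hp hq hYp h
  · rw [abs_of_pos (by simpa using h)]
    exact rpow_one_sub_div_le_sub_of_mem_PS hγ0 hγ1 hY hq hp hYq h

lemma card_le_of_subset_PS {γ X : ℝ} (hγ0 : 0 < γ) (hγ1 : γ ≤ 1) (hX : 1 ≤ X) {s : Finset ℕ}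
    (hs : ∀ n ∈ s, n ∈ PS γ ∧ (n : ℝ) ≤ X) : (#s : ℝ) ≤ 3 * X ^ γ := by
  set K := ⌊(X + 1) ^ γ⌋₊
  have hsub : s ⊆ (range (K + 1)).image fun m : ℕ => ⌊(m : ℝ) ^ ((1 : ℝ) / γ)⌋₊ := by
    intro n hn
    obtain ⟨⟨m, rfl⟩, hnX⟩ := hs n hn
    refine mem_image.mpr ⟨m, mem_range.mpr (Nat.lt_succ_of_le (Nat.le_floor ?_)), rfl⟩
    have hlt : (m : ℝ) ^ ((1 : ℝ) / γ) < X + 1 := by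
      linarith [Nat.lt_floor_add_one ((m : ℝ) ^ ((1 : ℝ) / γ))]
    calc (m : ℝ) = ((m : ℝ) ^ ((1 : ℝ) / γ)) ^ γ := by
          rw [one_div, rpow_inv_rpow (Nat.cast_nonneg m) hγ0.ne']
      _ ≤ (X + 1) ^ γ := rpow_le_rpow (by positivity) hlt.le hγ0.le
  have hXγ : (1 : ℝ) ≤ X ^ γ := one_le_rpow hX hγ0.le
  calc (#s : ℝ) ≤ K + 1 := by
        exact_mod_cast (card_le_card hsub).trans (card_image_le.trans (card_range _).le)
    _ ≤ (X + 1) ^ γ + 1 := by gcongr; exact Nat.floor_le (by positivity)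
    _ ≤ X ^ γ + 1 ^ γ + 1 := by
        gcongr; exact rpow_add_le_add_rpow (by linarith) zero_le_one hγ0.le hγ1
    _ ≤ 3 * X ^ γ := by rw [one_rpow]; linarith

lemma rpow_div_rpow_half_mul_rpow_half {γ c X : ℝ} (hγ : γ ≠ 0) (hX : 0 < X) :
    X ^ γ / ((X / 2) ^ (c - 1) * ((X / 2) ^ (1 - γ) / (2 * γ))) =
      2 * γ * 2 ^ (c - γ) * X ^ (2 * γ - c) := by
  have hhalf : (X / 2) ^ (c - 1) * (X / 2) ^ (1 - γ) = X ^ (c - γ) / 2 ^ (c - γ) := by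
    rw [← rpow_add (by positivity), ← div_rpow hX.le zero_le_two]; ring_nf
  have hsplit : X ^ γ = X ^ (2 * γ - c) * X ^ (c - γ) := by
    rw [← rpow_add hX]; ring_nf
  rw [← mul_div_assoc, hhalf, hsplit]
  field_simp

lemma one_add_log_one_add_div_le {δ X : ℝ} (hδ : 1 / 2 ≤ δ) (hX : 3 ≤ X) :
    1 + log (1 + X / δ) ≤ 3 * log X := by
  have hlogX : 1 ≤ log X := by
    rw [le_log_iff_exp_le (by linarith)]; linarith [exp_one_lt_d9]
  have hratio : X / δ ≤ 2 * X := by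
    rw [div_le_iff₀ (by linarith)]; nlinarith
  have : log (1 + X / δ) ≤ 2 * log X := by
    rw [show 2 * log X = log (X ^ 2) by rw [log_pow]; norm_num]
    exact log_le_log (by positivity) (by nlinarith)
  linarith

lemma intervalIntegral_norm_sq_sum_PS_le {γ c X a b : ℝ} (hγ0 : 0 < γ) (hγ1 : γ ≤ 1)
    (hc : 1 ≤ c) (hX : 3 ≤ X) (hab : a ≤ b) {s : Finset ℕ}
    (hs : ∀ p ∈ s, p ∈ PS γ ∧ X / 2 ≤ p ∧ (p : ℝ) ≤ X) :
    ∫ θ in a..b, ‖∑ p ∈ s, (log p : ℂ) * e (θ * (p : ℝ) ^ c)‖ ^ 2 ≤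
      3 * ((b - a) * X ^ γ * log X ^ 2) +
        36 * γ * 2 ^ (c - γ) / π * (X ^ (2 * γ - c) * log X ^ 3) := by
  have hY : 1 ≤ X / 2 := by linarith
  set L := log X
  set Y := X / 2
  -- the spacing of Piatetski-Shapiro numbers near `X`
  set δ := Y ^ (1 - γ) / (2 * γ)
  have hδ : 1 / 2 ≤ δ := by
    rw [le_div_iff₀ (by positivity)]
    nlinarith [one_le_rpow hY (by linarith : 0 ≤ 1 - γ)]
  have hY0 : 0 < Y := by linarith
  have hδ0 : 0 < δ := by linarith
  have hcard : (#s : ℝ) ≤ 3 * X ^ γ :=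
    card_le_of_subset_PS hγ0 hγ1 (by linarith) fun p hp => ⟨(hs p hp).1, (hs p hp).2.2⟩
  have hw : ∀ p ∈ s, ‖(log p : ℂ)‖ ≤ L := fun p hp => by
    have hp1 : (1 : ℝ) ≤ p := by linarith [(hs p hp).2.1]
    rw [Complex.norm_real, norm_of_nonneg (log_nonneg hp1)]
    exact log_le_log (by linarith) (hs p hp).2.2
  have hsep : ∀ p ∈ s, ∀ q ∈ s, p ≠ q → δ ≤ |(p : ℝ) - q| := fun p hp q hq =>
    rpow_one_sub_div_le_abs_sub_of_mem_PS hγ0 hγ1 hY0 (hs p hp).1 (hs q hq).1 (hs p hp).2.1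
      (hs q hq).2.1
  have hdiam : ∀ p ∈ s, ∀ q ∈ s, |(p : ℝ) - q| ≤ X := fun p hp q hq =>
    abs_sub_le_of_nonneg_of_le (Nat.cast_nonneg p) (hs p hp).2.2 (Nat.cast_nonneg q)
      (hs q hq).2.2
  have hinj : Set.InjOn (fun p : ℕ => (p : ℝ) ^ c) s := fun p _ q _ hpq =>
    Nat.cast_injective (rpow_left_injOn (by linarith) (Nat.cast_nonneg (α := ℝ) p)
      (Nat.cast_nonneg (α := ℝ) q) hpq)
  calc ∫ θ in a..b, ‖∑ p ∈ s, (log p : ℂ) * e (θ * (p : ℝ) ^ c)‖ ^ 2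
      ≤ (b - a) * ∑ p ∈ s, ‖(log p : ℂ)‖ ^ 2 + ∑ p ∈ s, ∑ q ∈ s.erase p,
          ‖(log p : ℂ)‖ * ‖(log q : ℂ)‖ / (π * |(p : ℝ) ^ c - (q : ℝ) ^ c|) :=
        intervalIntegral_norm_sq_sum_e_le s _ hinj a b
    _ ≤ (b - a) * (#s * L ^ 2) +
          #s * (L ^ 2 / (π * Y ^ (c - 1)) * (2 * ((1 + log (1 + X / δ)) / δ))) := by
        gcongr
        · rw [← nsmul_eq_mul]
          exact sum_le_card_nsmul _ _ _ fun p hp => pow_le_pow_left₀ (norm_nonneg _) (hw p hp) 2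
        · exact sum_sum_erase_div_abs_rpow_sub_le hc hY0 hδ0 (by linarith) hw
            (fun p hp => (hs p hp).2.1) hsep hdiam
    _ ≤ (b - a) * (3 * X ^ γ * L ^ 2) +
          3 * X ^ γ * (L ^ 2 / (π * Y ^ (c - 1)) * (2 * (3 * L / δ))) := by
        have hlog := one_add_log_one_add_div_le hδ hX
        have : 0 ≤ 1 + log (1 + X / δ) := by
          have := log_nonneg (le_add_of_nonneg_right (by positivity : 0 ≤ X / δ))
          linarith
        gcongr
    _ = _ := by
        rw [show 3 * X ^ γ * (L ^ 2 / (π * Y ^ (c - 1)) * (2 * (3 * L / δ))) =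
          18 * L ^ 3 / π * (X ^ γ / (Y ^ (c - 1) * δ)) by field_simp; ring,
          rpow_div_rpow_half_mul_rpow_half hγ0.ne' (by linarith)]
        ring

theorem stmt_6 (γ c : ℝ) (hγ0 : 0 < γ) (hγ1 : γ < 1) (hc : 1 < c) :
    ∃ C > 0, ∀ a b : ℝ, a ≤ b → ∀ X : ℝ, 3 ≤ X →
      (∫ θ in a..b,
        ‖∑ p ∈ (Finset.Ioc ⌊X / 2⌋₊ ⌊X⌋₊).filter Nat.Prime,
          Set.indicator (PS γ)
            (fun p => ((Real.log p : ℝ) : ℂ) * e (θ * (p : ℝ) ^ c)) p‖ ^ 2)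
        ≤ C * ((b - a) * X ^ γ * (Real.log X) ^ 2 + X ^ (2 * γ - c) * (Real.log X) ^ 3) := by
  classical
  refine ⟨3 + 36 * γ * 2 ^ (c - γ) / π, by positivity, fun a b hab X hX => ?_⟩
  have hs : ∀ p ∈ ((Ioc ⌊X / 2⌋₊ ⌊X⌋₊).filter Nat.Prime).filter (· ∈ PS γ),
      p ∈ PS γ ∧ X / 2 ≤ p ∧ (p : ℝ) ≤ X := fun p hp => by
    simp only [mem_filter, mem_Ioc] at hp
    obtain ⟨⟨⟨hlow, hhigh⟩, -⟩, hPS⟩ := hp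
    exact ⟨hPS, (Nat.lt_floor_add_one _).le.trans (by exact_mod_cast hlow),
      (Nat.cast_le.mpr hhigh).trans (Nat.floor_le (by linarith))⟩
  simp_rw [Set.indicator_apply, ← sum_filter]
  refine (intervalIntegral_norm_sq_sum_PS_le hγ0 hγ1.le hc.le hX hab hs).trans ?_
  have hA : 0 ≤ (b - a) * X ^ γ * log X ^ 2 := by
    have := sub_nonneg.mpr hab; positivity
  have hB : 0 ≤ X ^ (2 * γ - c) * log X ^ 3 := by
    have := log_nonneg (by linarith : (1 : ℝ) ≤ X); positivity
  nlinarith [mul_nonneg (by positivity : (0 : ℝ) ≤ 36 * γ * 2 ^ (c - γ) / π) hA]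
end

section
/- Let $0 < \gamma < 1 < c$ and define $V(\theta; X) = \gamma \int_{X/2}^X u^{\gamma-1} e(\theta u^c) \, du$. Then for $X \geq 3$, $\int_{\mathbb{R}} |V(\theta; X)|^2 \, d\theta \ll X^{2\gamma - c} \log X$, with implied constant depending only on $\gamma$ and $c$. -/
open MeasureTheory

/-! With `I(θ) = ∫_{X/2}^X u^{γ-1} e(θ u^c) du`, trivially `|γ I(θ)| ≤ X^γ`, and one integration
by parts against the phase, whose derivative `2πθc u^{c-1}` has no zero, gives
`|γ I(θ)| ≪ X^{γ-c} / |θ|`. So `|γ I|²` is dominated by `X^{2γ}` times a Cauchy density of width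
`X^{-c}`, whose integral is `≪ X^{2γ-c}`; the factor `log X ≥ 1` comes for free. -/

open Real Set intervalIntegral

lemma norm_e (x : ℝ) : ‖e x‖ = 1 := by
  simp [e, Complex.norm_exp]

lemma hasDerivAt_e_mul_rpow (θ c : ℝ) {u : ℝ} (hu : 0 < u) :
    HasDerivAt (fun x : ℝ => e (θ * x ^ c))
      (2 * π * Complex.I * θ * c * ((u ^ (c - 1) : ℝ) : ℂ) * e (θ * u ^ c)) u := by
  have h := ((((hasDerivAt_rpow_const (p := c) (Or.inl hu.ne')).const_mul θ).ofReal_comp).const_mul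
    (2 * π * Complex.I)).cexp
  unfold e
  convert h using 1
  push_cast
  ring

-- Integration by parts: the boundary terms give `m (U a + U b)`, the remaining integral at most
-- `m` times the total variation `U a - U b`.
lemma norm_integral_mul_deriv_le_of_antitone {U U' : ℝ → ℝ} {V V' : ℝ → ℂ} {a b m : ℝ}
    (hab : a ≤ b) (hU : ∀ x ∈ Icc a b, HasDerivAt U (U' x) x) (hU'cont : ContinuousOn U' (Icc a b))
    (hU'nonpos : ∀ x ∈ Icc a b, U' x ≤ 0) (hUb : 0 ≤ U b)
    (hV : ∀ x ∈ Icc a b, HasDerivAt V (V' x) x) (hV' : IntervalIntegrable V' volume a b)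
    (hVm : ∀ x ∈ Icc a b, ‖V x‖ ≤ m) :
    ‖∫ x in a..b, (U x : ℂ) * V' x‖ ≤ 2 * m * U a := by
  rw [← uIcc_of_le hab] at hU hU'cont hV
  have hU'int : IntervalIntegrable U' volume a b := hU'cont.intervalIntegrable
  have hvar : ∫ x in a..b, -U' x = U a - U b := by
    rw [intervalIntegral.integral_neg, integral_eq_sub_of_hasDerivAt hU hU'int, neg_sub]
  have hUba : U b ≤ U a := by
    have : 0 ≤ ∫ x in a..b, -U' x :=
      intervalIntegral.integral_nonneg hab fun x hx => neg_nonneg.2 (hU'nonpos x hx)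
    linarith
  have hbound : ‖∫ x in a..b, (U' x : ℂ) * V x‖ ≤ m * (U a - U b) := calc
    ‖∫ x in a..b, (U' x : ℂ) * V x‖ ≤ ∫ x in a..b, -U' x * m := by
      refine norm_integral_le_of_norm_le hab (ae_of_all _ fun x hx => ?_) (hU'int.neg.mul_const m)
      rw [norm_mul, Complex.norm_real, Real.norm_of_nonpos (hU'nonpos x (Ioc_subset_Icc_self hx))]
      exact mul_le_mul_of_nonneg_left (hVm x (Ioc_subset_Icc_self hx))
        (neg_nonneg.2 (hU'nonpos x (Ioc_subset_Icc_self hx)))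
    _ = m * (U a - U b) := by rw [intervalIntegral.integral_mul_const, hvar, mul_comm]
  rw [integral_mul_deriv_eq_deriv_mul (fun x hx => (hU x hx).ofReal_comp) hV
    (Complex.continuous_ofReal.comp_continuousOn hU'cont).intervalIntegrable hV']
  calc _ ≤ ‖(U b : ℂ) * V b‖ + ‖(U a : ℂ) * V a‖ + ‖∫ x in a..b, (U' x : ℂ) * V x‖ :=
        norm_sub_le_of_le (norm_sub_le _ _) le_rfl
    _ ≤ U b * m + U a * m + m * (U a - U b) := by
        rw [norm_mul, norm_mul, Complex.norm_real, Complex.norm_real,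
          Real.norm_of_nonneg hUb, Real.norm_of_nonneg (hUb.trans hUba)]
        have := hVm a (left_mem_Icc.2 hab)
        have := hVm b (right_mem_Icc.2 hab)
        have := hUb.trans hUba
        gcongr
    _ = 2 * m * U a := by ring

lemma norm_integral_rpow_mul_e_le (γ c θ : ℝ) {a b : ℝ} (hγ : 0 < γ) (ha : 0 < a) (hab : a ≤ b) :
    ‖∫ u in a..b, ((u ^ (γ - 1) : ℝ) : ℂ) * e (θ * u ^ c)‖ ≤ (b ^ γ - a ^ γ) / γ := calc
  _ ≤ ∫ u in a..b, u ^ (γ - 1) := by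
    refine norm_integral_le_of_norm_le hab (ae_of_all _ fun u hu => ?_)
      (intervalIntegral.intervalIntegrable_rpow' (by linarith))
    rw [norm_mul, norm_e, mul_one, Complex.norm_real,
      Real.norm_of_nonneg (rpow_nonneg (ha.trans hu.1).le _)]
  _ = (b ^ γ - a ^ γ) / γ := by
    rw [integral_rpow (Or.inl (by linarith)), sub_add_cancel]

lemma norm_integral_rpow_mul_e_mul_abs_le {γ c : ℝ} (θ : ℝ) {a b : ℝ} (hγc : γ < c) (hc : 0 < c)
    (ha : 0 < a) (hab : a ≤ b) :
    ‖∫ u in a..b, ((u ^ (γ - 1) : ℝ) : ℂ) * e (θ * u ^ c)‖ * |θ| ≤ a ^ (γ - c) / (π * c) := by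
  rcases eq_or_ne θ 0 with rfl | hθ
  · rw [abs_zero, mul_zero]
    positivity
  have hpos : ∀ x ∈ Icc a b, 0 < x := fun x hx => ha.trans_le hx.1
  set κ : ℂ := 2 * π * Complex.I * θ * c
  have hκ : ‖κ‖ = 2 * π * c * |θ| := by
    simp [κ, abs_of_pos pi_pos, abs_of_pos hc]
    ring
  have hκ0 : κ ≠ 0 := by
    rw [← norm_ne_zero_iff, hκ]
    have := abs_pos.2 hθ
    positivity
  have hsplit : ∀ u ∈ uIcc a b, ((u ^ (γ - 1) : ℝ) : ℂ) * e (θ * u ^ c)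
      = ((u ^ (γ - c) : ℝ) : ℂ) * (((u ^ (c - 1) : ℝ) : ℂ) * e (θ * u ^ c)) := by
    intro u hu
    rw [uIcc_of_le hab] at hu
    rw [← mul_assoc, ← Complex.ofReal_mul, ← rpow_add (hpos u hu)]
    ring_nf
  have hIBP := norm_integral_mul_deriv_le_of_antitone (U := fun x => x ^ (γ - c))
    (U' := fun x => (γ - c) * x ^ (γ - c - 1)) (V := fun x => e (θ * x ^ c) / κ)
    (V' := fun x => ((x ^ (c - 1) : ℝ) : ℂ) * e (θ * x ^ c)) (m := 1 / (2 * π * c * |θ|)) hab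
    (fun x hx => hasDerivAt_rpow_const (Or.inl (hpos x hx).ne'))
    (continuousOn_const.mul (continuousOn_id.rpow_const fun x hx => Or.inl (hpos x hx).ne'))
    (fun x hx => mul_nonpos_of_nonpos_of_nonneg (by linarith) (rpow_nonneg (hpos x hx).le _))
    (rpow_nonneg (ha.le.trans hab) _)
    (fun x hx => ((hasDerivAt_e_mul_rpow θ c (hpos x hx)).div_const κ).congr_deriv
      (mul_assoc κ _ _ ▸ mul_div_cancel_left₀ _ hκ0))
    (ContinuousOn.intervalIntegrable fun x hx => by
      rw [uIcc_of_le hab] at hx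
      exact ((Complex.continuous_ofReal.continuousAt.comp
        (continuousAt_rpow_const x _ (Or.inl (hpos x hx).ne'))).mul
        (hasDerivAt_e_mul_rpow θ c (hpos x hx)).continuousAt).continuousWithinAt)
    (fun x _ => by rw [norm_div, norm_e, hκ])
  rw [integral_congr hsplit]
  have := abs_pos.2 hθ
  calc _ ≤ 2 * (1 / (2 * π * c * |θ|)) * a ^ (γ - c) * |θ| := by gcongr
    _ = a ^ (γ - c) / (π * c) := by field_simp

lemma integral_le_of_le_of_mul_sq_le {f : ℝ → ℝ} {A B T : ℝ} (hT : 0 < T)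
    (hf0 : ∀ θ, 0 ≤ f θ) (hA : ∀ θ, f θ ≤ A) (hB : ∀ θ, f θ * θ ^ 2 ≤ B) :
    ∫ θ, f θ ≤ π * (A * T + B / T) := by
  -- `f` is dominated by a rescaled Cauchy density, whose integral is explicit.
  have hdom : ∀ θ, f θ ≤ (A + B / T ^ 2) * (1 + (θ / T) ^ 2)⁻¹ := by
    intro θ
    rw [← div_eq_mul_inv, le_div_iff₀ (by positivity), mul_add, mul_one, div_pow,
      ← mul_div_assoc]
    gcongr
    exacts [hA θ, hB θ]
  calc ∫ θ, f θ ≤ ∫ θ, (A + B / T ^ 2) * (1 + (θ / T) ^ 2)⁻¹ :=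
        integral_mono_of_nonneg (ae_of_all _ hf0)
          ((integrable_inv_one_add_sq.comp_div hT.ne').const_mul _) (ae_of_all _ hdom)
    _ = (A + B / T ^ 2) * (|T| * π) := by
        rw [MeasureTheory.integral_const_mul, Measure.integral_comp_div (fun x => (1 + x ^ 2)⁻¹) T,
          integral_univ_inv_one_add_sq, smul_eq_mul]
    _ = π * (A * T + B / T) := by
        rw [abs_of_pos hT]
        field_simp

noncomputable def V (γ c X θ : ℝ) : ℂ :=
  γ * ∫ u in (X / 2)..X, ((u ^ (γ - 1) : ℝ) : ℂ) * e (θ * u ^ c)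

section V

variable {γ c X : ℝ}

lemma norm_V (θ : ℝ) (hγ : 0 ≤ γ) :
    ‖V γ c X θ‖ = γ * ‖∫ u in (X / 2)..X, ((u ^ (γ - 1) : ℝ) : ℂ) * e (θ * u ^ c)‖ := by
  rw [V, norm_mul, Complex.norm_real, Real.norm_of_nonneg hγ]

lemma norm_V_le (θ : ℝ) (hγ : 0 < γ) (hX : 0 < X) : ‖V γ c X θ‖ ≤ X ^ γ := by
  rw [norm_V θ hγ.le]
  calc _ ≤ γ * ((X ^ γ - (X / 2) ^ γ) / γ) := by
        gcongr
        exact norm_integral_rpow_mul_e_le γ c θ hγ (by positivity) (by linarith)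
    _ ≤ X ^ γ := by
        rw [mul_div_cancel₀ _ hγ.ne']
        linarith [rpow_nonneg (by positivity : (0 : ℝ) ≤ X / 2) γ]

lemma norm_V_mul_abs_le (θ : ℝ) (hγ : 0 ≤ γ) (hγc : γ < c) (hc : 0 < c) (hX : 0 < X) :
    ‖V γ c X θ‖ * |θ| ≤ γ * 2 ^ (c - γ) / (π * c) * X ^ γ * X ^ (-c) := by
  have hhalf : (X / 2) ^ (γ - c) = 2 ^ (c - γ) * X ^ γ * X ^ (-c) := by
    rw [div_rpow hX.le zero_le_two, rpow_sub hX, rpow_neg hX.le, rpow_sub two_pos,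
      rpow_sub two_pos]
    field_simp
  rw [norm_V θ hγ, mul_assoc]
  calc _ ≤ γ * ((X / 2) ^ (γ - c) / (π * c)) := by
        gcongr
        exact norm_integral_rpow_mul_e_mul_abs_le θ hγc hc (by positivity) (by linarith)
    _ = _ := by
        rw [hhalf]
        ring

lemma integral_norm_V_sq_le (hγ : 0 < γ) (hγc : γ < c) (hX : 0 < X) :
    ∫ θ, ‖V γ c X θ‖ ^ 2 ≤ π * (1 + (γ * 2 ^ (c - γ) / (π * c)) ^ 2) * X ^ (2 * γ - c) := by
  set K := γ * 2 ^ (c - γ) / (π * c)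
  have hT : 0 < X ^ (-c) := rpow_pos_of_pos hX _
  calc _ ≤ π * ((X ^ γ) ^ 2 * X ^ (-c) + (K * X ^ γ * X ^ (-c)) ^ 2 / X ^ (-c)) :=
        integral_le_of_le_of_mul_sq_le hT (fun θ => by positivity)
          (fun θ => pow_le_pow_left₀ (norm_nonneg _) (norm_V_le θ hγ hX) 2)
          (fun θ => by
            rw [← sq_abs θ, ← mul_pow]
            exact pow_le_pow_left₀ (by positivity)
              (norm_V_mul_abs_le θ hγ.le hγc (hγ.trans hγc) hX) 2)
    _ = π * (1 + K ^ 2) * ((X ^ γ) ^ 2 * X ^ (-c)) := by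
        field_simp
    _ = π * (1 + K ^ 2) * X ^ (2 * γ - c) := by
        rw [← rpow_natCast (X ^ γ), ← rpow_mul hX.le, ← rpow_add hX]
        ring_nf

end V

theorem stmt_8 (γ c : ℝ) (hγ0 : 0 < γ) (hγ1 : γ < 1) (hc : 1 < c) :
    ∃ C > 0, ∀ X : ℝ, 3 ≤ X →
      (∫ θ : ℝ,
        ‖(γ : ℂ) * ∫ u in (X / 2)..X, ((u ^ (γ - 1) : ℝ) : ℂ) * e (θ * u ^ c)‖ ^ 2)
        ≤ C * X ^ (2 * γ - c) * Real.log X := by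
  refine ⟨π * (1 + (γ * 2 ^ (c - γ) / (π * c)) ^ 2), by positivity, fun X hX => ?_⟩
  have hX0 : 0 < X := by linarith
  have hlog : 1 ≤ Real.log X := by
    rw [Real.le_log_iff_exp_le hX0]
    linarith [Real.exp_one_lt_d9]
  calc ∫ θ, ‖V γ c X θ‖ ^ 2 ≤ _ := integral_norm_V_sq_le hγ0 (by linarith) hX0
    _ ≤ _ := le_mul_of_one_le_right (by positivity) hlog
end

section
/- Let $c > 1$ be a non-integer real and $\tau > 0$ be small. For each fixed $t \geq 1$ and parameters $X_1 = X$, $X_j = \frac{1}{2} X_{j-1}^{1-1/c}$ for $2 \leq j \leq t$, the number of solutions of $|x_1^c - x_2^c + x_3^c - x_4^c + \cdots + x_{2t-1}^c - x_{2t}^c| < 4\tau$ in integers with $x_{2j-1}, x_{2j} \in (X_j/2, X_j]$ for $1 \leq j \leq t$, where $\tau \leq c_0 X_t^{c-1}$ for a suitably small constant $c_0 = c_0(c) > 0$ and $X$ is sufficiently large, consists only of diagonal solutions, i.e., those with $x_{2j-1} = x_{2j}$ for all $j$. -/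
/-!
Write `d_j = x_{2j-1}^c - x_{2j}^c` and let `j` be the first index with `x_{2j-1} ≠ x_{2j}`.
By the mean value theorem, `|d_j| ≥ c (X_j/2)^{c-1}`. Each later term satisfies
`|d_k| ≤ X_k^c = X_{k-1}^{c-1}/2^c`, and for large `X` the quantities `X_k^{c-1}` at least halve
from one scale to the next, so `∑_{k>j} |d_k| ≤ (X_j/2)^{c-1}`. The remaining gap
`(c-1)(X_j/2)^{c-1} ≥ (c-1)(X_t/2)^{c-1}` exceeds `4τ`, which contradicts `|∑ d_k| < 4τ`.
-/

open Finset Filter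

lemma mul_rpow_sub_one_mul_sub_le_rpow_sub_rpow {c a b : ℝ} (hc : 1 ≤ c) (hb : 0 < b)
    (hba : b ≤ a) : c * b ^ (c - 1) * (a - b) ≤ a ^ c - b ^ c := by
  have hs : (-1 : ℝ) ≤ (a - b) / b := by
    have := div_nonneg (sub_nonneg.2 hba) hb.le
    linarith
  have ha : a = b * (1 + (a - b) / b) := by field_simp; ring
  calc c * b ^ (c - 1) * (a - b) = b ^ c * (c * ((a - b) / b)) := by
        rw [Real.rpow_sub_one hb.ne']; field_simp
    _ ≤ b ^ c * ((1 + (a - b) / b) ^ c - 1) := by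
        gcongr; linarith [one_add_mul_self_le_rpow_one_add hs hc]
    _ = a ^ c - b ^ c := by
        conv_rhs => rw [ha, Real.mul_rpow hb.le (by linarith)]
        ring

lemma mul_rpow_sub_one_le_abs_natCast_rpow_sub {c y : ℝ} (hc : 1 ≤ c) (hy : 0 < y) {m n : ℕ}
    (hmn : m ≠ n) (hm : y ≤ m) (hn : y ≤ n) : c * y ^ (c - 1) ≤ |(m : ℝ) ^ c - (n : ℝ) ^ c| := by
  wlog hlt : m < n generalizing m n
  · rw [abs_sub_comm]
    exact this hmn.symm hn hm (by omega)
  have hgap : (1 : ℝ) ≤ n - m := by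
    have : (m : ℝ) + 1 ≤ n := by exact_mod_cast hlt
    linarith
  calc c * y ^ (c - 1) ≤ c * (m : ℝ) ^ (c - 1) * (n - m) := by
        rw [← mul_one (c * y ^ (c - 1))]
        gcongr
    _ ≤ (n : ℝ) ^ c - (m : ℝ) ^ c :=
        mul_rpow_sub_one_mul_sub_le_rpow_sub_rpow hc (hy.trans_le hm) (by exact_mod_cast hlt.le)
    _ ≤ |(m : ℝ) ^ c - (n : ℝ) ^ c| := by
        rw [abs_sub_comm]
        exact le_abs_self _

lemma sum_Ico_add_two_mul_le_of_halving {a : ℕ → ℝ} {m n : ℕ} (hmn : m ≤ n)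
    (ha : ∀ k ∈ Ico m n, a (k + 1) ≤ a k / 2) : ∑ k ∈ Ico m n, a k + 2 * a n ≤ 2 * a m := by
  induction n, hmn using Nat.le_induction with
  | base => simp
  | succ n hmn ih =>
    have hn := ha n (by simp [hmn])
    have := ih fun k hk => ha k (Ico_subset_Ico_right n.le_succ hk)
    rw [sum_Ico_succ_top hmn]
    linarith

lemma eq_zero_of_abs_sum_lt_of_dominates_tail {ι : Type*} [LinearOrder ι] (s : Finset ι)
    (d : ι → ℝ) {ε : ℝ} (hdom : ∀ j ∈ s, d j ≠ 0 → ε + ∑ k ∈ s with j < k, |d k| ≤ |d j|)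
    (hsum : |∑ j ∈ s, d j| < ε) : ∀ j ∈ s, d j = 0 := by
  induction s using Finset.induction_on_min with
  | empty => simp
  | insert a s has ih =>
    have ha : a ∉ s := fun h => lt_irrefl a (has a h)
    have hfilter : ∀ j ∈ s, {k ∈ insert a s | j < k} = {k ∈ s | j < k} := fun j hj => by
      rw [filter_insert, if_neg (has j hj).not_gt]
    have hda : d a = 0 := by
      by_contra hne
      have hdom_a := hdom a (mem_insert_self a s) hne
      rw [filter_insert, if_neg (lt_irrefl a), filter_true_of_mem has] at hdom_a
      rw [sum_insert ha] at hsum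
      have htri := abs_sub (d a + ∑ j ∈ s, d j) (∑ j ∈ s, d j)
      rw [add_sub_cancel_right] at htri
      linarith [abs_sum_le_sum_abs d s]
    rw [sum_insert ha, hda, zero_add] at hsum
    have hs := ih (fun j hj => hfilter j hj ▸ hdom j (mem_insert_of_mem hj)) hsum
    simpa [hda] using hs

theorem eq_of_abs_sum_rpow_sub_lt {c : ℝ} (hc : 1 < c) {t : ℕ} {Y : ℕ → ℝ} {p q : ℕ → ℕ}
    (hY : ∀ j ∈ Icc 1 t, 0 < Y j)
    (hY_succ : ∀ j ∈ Ico 1 t, Y (j + 1) ^ c = Y j ^ (c - 1) / 2 ^ c)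
    (hY_halve : ∀ j ∈ Ico 1 t, Y (j + 1) ^ (c - 1) ≤ Y j ^ (c - 1) / 2)
    (hpq : ∀ j ∈ Icc 1 t, Y j / 2 < p j ∧ (p j : ℝ) ≤ Y j ∧ Y j / 2 < q j ∧ (q j : ℝ) ≤ Y j)
    (hsum : |∑ j ∈ Icc 1 t, ((p j : ℝ) ^ c - (q j : ℝ) ^ c)| <
      (c - 1) / 2 ^ (c - 1) * Y t ^ (c - 1)) :
    ∀ j ∈ Icc 1 t, p j = q j := by
  have hzero := eq_zero_of_abs_sum_lt_of_dominates_tail _ _ ?_ hsum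
  · intro j hj
    obtain ⟨hp, -, hq, -⟩ := hpq j hj
    have hY0 := hY j hj
    exact_mod_cast (Real.rpow_left_inj (by positivity) (by positivity) (by linarith)).1
      (sub_eq_zero.1 (hzero j hj))
  intro j hj hne
  obtain ⟨hj1, hjt⟩ := mem_Icc.1 hj
  set a : ℕ → ℝ := fun k => Y k ^ (c - 1)
  have ha_nonneg : ∀ k ∈ Icc 1 t, 0 ≤ a k := fun k hk => Real.rpow_nonneg (hY k hk).le _
  have hgeom := sum_Ico_add_two_mul_le_of_halving (a := a) hjt fun k hk =>
    hY_halve k (Ico_subset_Ico_left hj1 hk)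
  have hS : 0 ≤ ∑ k ∈ Ico j t, a k := sum_nonneg fun k hk =>
    ha_nonneg k (Ico_subset_Icc_self (Ico_subset_Ico_left hj1 hk))
  have hat : 0 ≤ a t := ha_nonneg t (right_mem_Icc.2 (hj1.trans hjt))
  have h2c : (2 : ℝ) ^ c = 2 * 2 ^ (c - 1) := by
    rw [Real.rpow_sub_one two_ne_zero]; ring
  have hmain : c * a j / 2 ^ (c - 1) ≤ |(p j : ℝ) ^ c - (q j : ℝ) ^ c| := by
    obtain ⟨hp, -, hq, -⟩ := hpq j hj
    have hpq_ne : p j ≠ q j := fun h => hne (by rw [h, sub_self])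
    have := mul_rpow_sub_one_le_abs_natCast_rpow_sub hc.le (half_pos (hY j hj)) hpq_ne hp.le hq.le
    rwa [Real.div_rpow (hY j hj).le zero_le_two, ← mul_div_assoc] at this
  have htail : ∑ k ∈ Icc 1 t with j < k, |(p k : ℝ) ^ c - (q k : ℝ) ^ c| ≤
      (∑ k ∈ Ico j t, a k) / 2 ^ c := by
    have hIoc : {k ∈ Icc 1 t | j < k} = Ioc j t := by
      ext k; simp only [mem_filter, mem_Icc, mem_Ioc]; omega
    rw [hIoc, ← Ico_add_one_add_one_eq_Ioc, ← sum_Ico_add', sum_div]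
    refine sum_le_sum fun k hk => ?_
    have hk1 : k + 1 ∈ Icc 1 t := by simp only [mem_Ico, mem_Icc] at hk ⊢; omega
    obtain ⟨-, hp, -, hq⟩ := hpq (k + 1) hk1
    rw [← hY_succ k (Ico_subset_Ico_left hj1 hk)]
    exact abs_sub_le_of_nonneg_of_le (by positivity)
      (Real.rpow_le_rpow (by positivity) hp (by linarith)) (by positivity)
      (Real.rpow_le_rpow (by positivity) hq (by linarith))
  have hmono : (c - 1) * a t ≤ (c - 1) * a j := by gcongr; linarith
  calc (c - 1) / 2 ^ (c - 1) * Y t ^ (c - 1) + _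
      ≤ ((c - 1) * a t + (∑ k ∈ Ico j t, a k) / 2) / 2 ^ (c - 1) := by
        rw [h2c, ← div_div] at htail
        rw [add_div, div_mul_eq_mul_div]
        linarith
    _ ≤ c * a j / 2 ^ (c - 1) := by gcongr; linarith
    _ ≤ _ := hmain

noncomputable def scaleStep (c y : ℝ) : ℝ := 1 / 2 * y ^ (1 - 1 / c)

lemma scaleStep_rpow {c y : ℝ} (hc : 0 < c) (hy : 0 ≤ y) :
    scaleStep c y ^ c = y ^ (c - 1) / 2 ^ c := by
  have hexp : (1 - 1 / c) * c = c - 1 := by field_simp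
  rw [scaleStep, Real.mul_rpow (by norm_num) (Real.rpow_nonneg hy _), ← Real.rpow_mul hy, hexp,
    Real.div_rpow zero_le_one zero_le_two, Real.one_rpow]
  ring

lemma eventually_scaleStep_rpow_le_half {c : ℝ} (hc : 1 < c) :
    ∀ᶠ y in atTop, scaleStep c y ^ (c - 1) ≤ y ^ (c - 1) / 2 := by
  have hexp : (1 - 1 / c) * (c - 1) + (c - 1) / c = c - 1 := by field_simp; ring
  filter_upwards [eventually_ge_atTop 0,
    (tendsto_rpow_atTop (by positivity : 0 < (c - 1) / c)).eventually_ge_atTop 2] with y hy hy2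
  have h2 : (1 : ℝ) ≤ 2 ^ (c - 1) := Real.one_le_rpow one_le_two (by linarith)
  have hA : 0 ≤ y ^ ((1 - 1 / c) * (c - 1)) := Real.rpow_nonneg hy _
  calc scaleStep c y ^ (c - 1) = y ^ ((1 - 1 / c) * (c - 1)) / 2 ^ (c - 1) := by
        rw [scaleStep, Real.mul_rpow (by norm_num) (Real.rpow_nonneg hy _), ← Real.rpow_mul hy,
          Real.div_rpow zero_le_one zero_le_two, Real.one_rpow]
        ring
    _ ≤ y ^ ((1 - 1 / c) * (c - 1)) := div_le_self hA h2
    _ ≤ y ^ ((1 - 1 / c) * (c - 1)) * (y ^ ((c - 1) / c) / 2) :=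
        le_mul_of_one_le_right hA (by linarith)
    _ = y ^ (c - 1) / 2 := by
        rw [mul_div_assoc', ← Real.rpow_add' hy (by rw [hexp]; linarith), hexp]

lemma tendsto_scaleStep_iterate {c : ℝ} (hc : 1 < c) (n : ℕ) :
    Tendsto (scaleStep c)^[n] atTop atTop := by
  induction n with
  | zero => exact tendsto_id
  | succ n ih =>
    rw [Function.iterate_succ']
    have hexp : 0 < 1 - 1 / c := by
      rw [sub_pos, div_lt_one (by linarith)]
      exact hc
    exact ((tendsto_rpow_atTop hexp).const_mul_atTop (by norm_num)).comp ih

lemma eq_scaleStep_iterate {c X : ℝ} {Xs : ℕ → ℝ} (hXs1 : Xs 1 = X)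
    (hstep : ∀ j, 1 ≤ j → Xs (j + 1) = scaleStep c (Xs j)) :
    ∀ j, 1 ≤ j → Xs j = (scaleStep c)^[j - 1] X := by
  intro j hj
  induction j, hj using Nat.le_induction with
  | base => exact hXs1
  | succ j hj ih =>
    rw [hstep j hj, ih, ← Function.iterate_succ_apply' (scaleStep c)]
    congr 1
    omega

theorem stmt_10_general (c : ℝ) (hc : 1 < c) (t : ℕ) :
    ∃ c₀ > (0 : ℝ), ∃ X₀ : ℝ, ∀ X : ℝ, X₀ ≤ X →
      ∀ Xs : ℕ → ℝ, Xs 1 = X →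
        (∀ j, 2 ≤ j → Xs j = (1 / 2) * (Xs (j - 1)) ^ (1 - 1 / c)) →
        ∀ τ : ℝ, 0 < τ → τ ≤ c₀ * (Xs t) ^ (c - 1) →
          ∀ x : ℕ → ℕ,
            (∀ j ∈ Finset.Icc 1 t,
              Xs j / 2 < (x (2 * j - 1) : ℝ) ∧ (x (2 * j - 1) : ℝ) ≤ Xs j ∧
              Xs j / 2 < (x (2 * j) : ℝ) ∧ (x (2 * j) : ℝ) ≤ Xs j) →
            |∑ j ∈ Finset.Icc 1 t, ((x (2 * j - 1) : ℝ) ^ c - (x (2 * j) : ℝ) ^ c)| < 4 * τ →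
            ∀ j ∈ Finset.Icc 1 t, x (2 * j - 1) = x (2 * j) := by
  have hlarge : ∀ᶠ X in atTop, ∀ k ∈ range t, 0 < (scaleStep c)^[k] X ∧
      scaleStep c ((scaleStep c)^[k] X) ^ (c - 1) ≤ (scaleStep c)^[k] X ^ (c - 1) / 2 :=
    (eventually_all_finset _).2 fun k _ => (tendsto_scaleStep_iterate hc k).eventually
      ((eventually_gt_atTop 0).and (eventually_scaleStep_rpow_le_half hc))
  obtain ⟨X₀, hX₀⟩ := eventually_atTop.1 hlarge
  -- `4 c₀ X_t^{c-1} = (c-1) (X_t/2)^{c-1}`, the gap left by the first off-diagonal term.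
  refine ⟨(c - 1) / 2 ^ (c - 1) / 4, by have := sub_pos.2 hc; positivity, X₀,
    fun X hX Xs hXs1 hXs τ _ hτ x hx hsum => ?_⟩
  have hstep (j : ℕ) (hj : 1 ≤ j) : Xs (j + 1) = scaleStep c (Xs j) := by
    rw [hXs (j + 1) (by omega), Nat.add_sub_cancel, scaleStep]
  have hlargeXs (j : ℕ) (hj : j ∈ Icc 1 t) :
      0 < Xs j ∧ Xs (j + 1) ^ (c - 1) ≤ Xs j ^ (c - 1) / 2 := by
    obtain ⟨hj1, hjt⟩ := mem_Icc.1 hj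
    rw [hstep j hj1, eq_scaleStep_iterate hXs1 hstep j hj1]
    exact hX₀ X hX (j - 1) (mem_range.2 (by omega))
  refine eq_of_abs_sum_rpow_sub_lt hc (fun j hj => (hlargeXs j hj).1) (fun j hj => ?_)
    (fun j hj => (hlargeXs j (Ico_subset_Icc_self hj)).2) hx (hsum.trans_le (by linarith))
  rw [hstep j (mem_Ico.1 hj).1,
    scaleStep_rpow (by linarith) (hlargeXs j (Ico_subset_Icc_self hj)).1.le]

theorem stmt_10 (c : ℝ) (hc : 1 < c) (hcn : ∀ n : ℕ, (n : ℝ) ≠ c) (t : ℕ) (ht : 1 ≤ t) :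
    ∃ c₀ > (0 : ℝ), ∃ X₀ : ℝ, ∀ X : ℝ, X₀ ≤ X →
      ∀ Xs : ℕ → ℝ, Xs 1 = X →
        (∀ j, 2 ≤ j → Xs j = (1 / 2) * (Xs (j - 1)) ^ (1 - 1 / c)) →
        ∀ τ : ℝ, 0 < τ → τ ≤ c₀ * (Xs t) ^ (c - 1) →
          ∀ x : ℕ → ℕ,
            (∀ j ∈ Finset.Icc 1 t,
              Xs j / 2 < (x (2 * j - 1) : ℝ) ∧ (x (2 * j - 1) : ℝ) ≤ Xs j ∧
              Xs j / 2 < (x (2 * j) : ℝ) ∧ (x (2 * j) : ℝ) ≤ Xs j) →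
            |∑ j ∈ Finset.Icc 1 t, ((x (2 * j - 1) : ℝ) ^ c - (x (2 * j) : ℝ) ^ c)| < 4 * τ →
            ∀ j ∈ Finset.Icc 1 t, x (2 * j - 1) = x (2 * j) :=
  stmt_10_general c hc t
end
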